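/- arXiv:1512.06371 — 2 statements merged into one kernel-verified Lean document; each statement's English description precedes it below -/
import Mathlib

section
/- There exists a simple graph G on the positive integers that is I_6-free and satisfies liminf_{n→∞} e(G_n)/n² ≥ 3683/17672, i.e., ≥ (1/4)(1 − 1/6) + 1/13254. -/
open Filter

/-- `G` contains an increasing path of length `k`: vertices
`i₁ < i₂ < ⋯ < i_{k+1}` (all positive integers) with consecutive vertices adjacent. -/
def HasIncPath (G : SimpleGraph ℕ) (k : ℕ) : Prop :=
  ∃ f : Fin (k + 1) → ℕ, (∀ i, 1 ≤ f i) ∧ StrictMono f ∧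
    ∀ i : Fin k, G.Adj (f i.castSucc) (f i.succ)

/-- `e(G_n)`: the number of edges of the subgraph of `G` induced by `{1, …, n}`. -/
noncomputable def edgeCount (G : SimpleGraph ℕ) (n : ℕ) : ℕ :=
  {p : ℕ × ℕ | 1 ≤ p.1 ∧ p.1 < p.2 ∧ p.2 ≤ n ∧ G.Adj p.1 p.2}.ncard

/-!
Colour each vertex `i` with a label in `{0, …, 5}` and join `i < j` exactly when the label
increases; an increasing path then has strictly increasing labels, so there is no `I_6`.
On the dyadic scale `[2^T, 2^(T+1))` the labels repeat a 16-periodic pattern that depends on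
`T mod 4`. Counting ascending pairs scale by scale, the ascents from `[1, 2^T)` into one block
of pattern `v` number `x (T mod 4) v · 2^T + O(1)`, and those inside `[1, 2^T)` number
`a (T mod 4) · 4^T + O(2^T)`, where `x` and `a` are the 4-periodic solutions of the linear
recursions relating consecutive scales. For `n` in scale `T`, with a fraction `16 y / 2^T` of
the scale present, the count is a quadratic form in `(2^T, y)` which is at least
`0.2086 · n² - O(n)`, and `0.2086 > 3683/17672`.
-/

open Finset

def labelGraph (c : ℕ → ℕ) : SimpleGraph ℕ :=
  SimpleGraph.fromRel fun i j => i < j ∧ c i < c j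

lemma labelGraph_adj {c : ℕ → ℕ} {i j : ℕ} (h : i < j) :
    (labelGraph c).Adj i j ↔ c i < c j := by
  simp only [labelGraph, SimpleGraph.fromRel_adj]
  constructor
  · rintro ⟨-, ⟨-, hc⟩ | ⟨hji, -⟩⟩
    · exact hc
    · omega
  · exact fun hc => ⟨h.ne, Or.inl ⟨h, hc⟩⟩

lemma not_hasIncPath_labelGraph {c : ℕ → ℕ} {k : ℕ} (hc : ∀ i, c i < k) :
    ¬ HasIncPath (labelGraph c) k := by
  rintro ⟨f, -, hf, hadj⟩
  have hmono : StrictMono (c ∘ f) := Fin.strictMono_iff_lt_succ.mpr fun i =>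
    (labelGraph_adj (hf i.castSucc_lt_succ)).mp (hadj i)
  have := Fintype.card_le_of_injective (fun i => (⟨c (f i), hc _⟩ : Fin k))
    fun i j hij => hmono.injective (Fin.mk.inj hij)
  simp at this

lemma edgeCount_le_sq (G : SimpleGraph ℕ) (n : ℕ) : edgeCount G n ≤ n ^ 2 := by
  have hsub : {p : ℕ × ℕ | 1 ≤ p.1 ∧ p.1 < p.2 ∧ p.2 ≤ n ∧ G.Adj p.1 p.2} ⊆
      ↑(Icc 1 n ×ˢ Icc 1 n) := by
    rintro p ⟨h1, h12, h2, -⟩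
    simp only [coe_product, coe_Icc, Set.mem_prod, Set.mem_Icc]
    omega
  calc edgeCount G n ≤ (Icc 1 n ×ˢ Icc 1 n).card := by
        rw [← Set.ncard_coe_finset]; exact Set.ncard_le_ncard hsub
    _ = n ^ 2 := by simp [sq]

def ascents (c : ℕ → ℕ) (lo hi : ℕ) : ℕ :=
  ∑ i ∈ Ico lo hi, ∑ j ∈ Ico (i + 1) hi, if c i < c j then 1 else 0

def crossAscents (c : ℕ → ℕ) (I J : Finset ℕ) : ℕ :=
  ∑ i ∈ I, ∑ j ∈ J, if c i < c j then 1 else 0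

lemma edgeCount_labelGraph (c : ℕ → ℕ) (n : ℕ) :
    edgeCount (labelGraph c) n = ascents c 1 (n + 1) := by
  have hset :
      {p : ℕ × ℕ | 1 ≤ p.1 ∧ p.1 < p.2 ∧ p.2 ≤ n ∧ (labelGraph c).Adj p.1 p.2} =
      ↑((Ico 1 (n + 1) ×ˢ Ico 1 (n + 1)).filter fun p => p.1 < p.2 ∧ c p.1 < c p.2) := by
    ext ⟨i, j⟩
    simp only [Set.mem_ofPred_eq, coe_filter, mem_product, mem_Ico]
    constructor
    · rintro ⟨h1, hij, hj, hadj⟩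
      exact ⟨⟨⟨h1, by omega⟩, by omega, by omega⟩, hij, (labelGraph_adj hij).mp hadj⟩
    · rintro ⟨⟨⟨h1, -⟩, -, hj⟩, hij, hc⟩
      exact ⟨h1, hij, by omega, (labelGraph_adj hij).mpr hc⟩
  have hrow : ∀ i ∈ Ico 1 (n + 1),
      (∑ j ∈ Ico 1 (n + 1), if i < j ∧ c i < c j then 1 else 0) =
      ∑ j ∈ Ico (i + 1) (n + 1), if c i < c j then 1 else 0 := by
    intro i hi
    simp_rw [ite_and, ← sum_filter]
    congr 1
    ext j
    simp only [mem_filter, mem_Ico] at hi ⊢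
    omega
  rw [edgeCount, hset, Set.ncard_coe_finset, card_filter, sum_product, ascents]
  exact sum_congr rfl hrow

lemma ascents_eq_add {c : ℕ → ℕ} {lo mid hi : ℕ} (h₁ : lo ≤ mid) (h₂ : mid ≤ hi) :
    ascents c lo hi =
      ascents c lo mid + ascents c mid hi + crossAscents c (Ico lo mid) (Ico mid hi) := by
  have hrow : ∀ i ∈ Ico lo mid, (∑ j ∈ Ico (i + 1) hi, if c i < c j then 1 else 0) =
      (∑ j ∈ Ico (i + 1) mid, if c i < c j then 1 else 0) +
        ∑ j ∈ Ico mid hi, if c i < c j then 1 else 0 := fun i hi =>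
    (sum_Ico_consecutive _ (mem_Ico.mp hi).2 h₂).symm
  simp only [ascents, crossAscents]
  rw [← sum_Ico_consecutive _ h₁ h₂, sum_congr rfl hrow, sum_add_distrib]
  ring

lemma ascents_mono_right (c : ℕ → ℕ) {lo hi hi' : ℕ} (hlo : lo ≤ hi) (h : hi ≤ hi') :
    ascents c lo hi ≤ ascents c lo hi' := by
  rw [ascents_eq_add (c := c) hlo h]
  omega

lemma crossAscents_Ico_add_left (c : ℕ → ℕ) (J : Finset ℕ) {a b d : ℕ} (h₁ : a ≤ b)
    (h₂ : b ≤ d) :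
    crossAscents c (Ico a d) J = crossAscents c (Ico a b) J + crossAscents c (Ico b d) J :=
  (sum_Ico_consecutive _ h₁ h₂).symm

lemma sum_Ico_mod_of_dvd {M : Type*} [AddCommMonoid M] (f : ℕ → M) {L m : ℕ} (hm : L ∣ m)
    (k : ℕ) : ∑ i ∈ Ico m (m + L * k), f (i % L) = k • ∑ r ∈ range L, f r := by
  obtain ⟨j, rfl⟩ := hm
  induction k with
  | zero => simp
  | succ k ih =>
    have hblock : ∑ i ∈ Ico (L * j + L * k) (L * j + L * (k + 1)), f (i % L) =
        ∑ r ∈ range L, f r := by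
      rw [sum_Ico_eq_sum_range, show L * j + L * (k + 1) - (L * j + L * k) = L by ring_nf; omega]
      refine sum_congr rfl fun r hr => ?_
      rw [show L * j + L * k + r = r + L * (j + k) by ring, Nat.add_mul_mod_self_left,
        Nat.mod_eq_of_lt (mem_range.mp hr)]
    rw [← sum_Ico_consecutive _ (Nat.le_add_right _ (L * k))
      (Nat.add_le_add_left (Nat.mul_le_mul_left L k.le_succ) _), ih, hblock, succ_nsmul]

def patternAscents (L : ℕ) (u v : ℕ → ℕ) : ℕ :=
  ∑ r ∈ range L, ∑ s ∈ range L, if u r < v s then 1 else 0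

lemma patternAscents_le (L : ℕ) (u v : ℕ → ℕ) : patternAscents L u v ≤ L ^ 2 := by
  calc patternAscents L u v ≤ ∑ r ∈ range L, ∑ s ∈ range L, 1 :=
        sum_le_sum fun r _ => sum_le_sum fun s _ => by split_ifs <;> omega
    _ = L ^ 2 := by simp [sq]

section Periodic

variable {c : ℕ → ℕ} {L : ℕ} {u v : ℕ → ℕ}

lemma crossAscents_of_periodic {m q k l : ℕ} (hm : L ∣ m) (hq : L ∣ q)
    (hu : ∀ i ∈ Ico m (m + L * k), c i = u (i % L))
    (hv : ∀ j ∈ Ico q (q + L * l), c j = v (j % L)) :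
    crossAscents c (Ico m (m + L * k)) (Ico q (q + L * l)) = k * l * patternAscents L u v := by
  calc crossAscents c (Ico m (m + L * k)) (Ico q (q + L * l))
      = ∑ i ∈ Ico m (m + L * k), ∑ j ∈ Ico q (q + L * l),
          if u (i % L) < v (j % L) then 1 else 0 :=
        sum_congr rfl fun i hi => sum_congr rfl fun j hj => by rw [hu i hi, hv j hj]
    _ = ∑ i ∈ Ico m (m + L * k), l • ∑ s ∈ range L, if u (i % L) < v s then 1 else 0 :=
        sum_congr rfl fun i _ =>
          sum_Ico_mod_of_dvd (fun s => if u (i % L) < v s then 1 else 0) hq l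
    _ = k • ∑ r ∈ range L, l • ∑ s ∈ range L, if u r < v s then 1 else 0 :=
        sum_Ico_mod_of_dvd (fun r => l • ∑ s ∈ range L, if u r < v s then 1 else 0) hm k
    _ = k * l * patternAscents L u v := by
        rw [← smul_sum, patternAscents, smul_eq_mul, smul_eq_mul, mul_assoc]

lemma choose_two_mul_patternAscents_le_ascents {m k : ℕ} (hm : L ∣ m)
    (hu : ∀ i ∈ Ico m (m + L * k), c i = u (i % L)) :
    k.choose 2 * patternAscents L u u ≤ ascents c m (m + L * k) := by
  induction k with
  | zero => simp
  | succ k ih =>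
    have hsplit := ascents_eq_add (c := c) (Nat.le_add_right m (L * k))
      (Nat.add_le_add_left (Nat.mul_le_mul_left L k.le_succ) m)
    have hlast : crossAscents c (Ico m (m + L * k)) (Ico (m + L * k) (m + L * (k + 1))) =
        k * patternAscents L u u := by
      rw [show m + L * (k + 1) = m + L * k + L * 1 by ring,
        crossAscents_of_periodic hm (hm.add (dvd_mul_right L k)), mul_one]
      · exact fun i hi => hu i (by simp only [mem_Ico] at hi ⊢; constructor <;> nlinarith)
      · exact fun j hj => hu j (by simp only [mem_Ico] at hj ⊢; constructor <;> nlinarith)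
    have hprev := ih fun i hi => hu i (by simp only [mem_Ico] at hi ⊢; constructor <;> nlinarith)
    rw [Nat.choose_succ_succ, Nat.choose_one_right]
    nlinarith

end Periodic

def pattern (t : Fin 4) (r : ℕ) : ℕ :=
  (![[0, 0, 1, 1, 1, 1, 1, 2, 2, 2, 4, 4, 5, 5, 5, 5],
     [0, 1, 1, 1, 2, 2, 2, 2, 2, 3, 3, 3, 3, 4, 5, 5],
     [0, 0, 0, 1, 2, 2, 2, 3, 3, 3, 3, 3, 4, 4, 4, 5],
     [0, 0, 0, 0, 0, 1, 1, 3, 3, 4, 4, 4, 4, 5, 5, 5]] t).getD r 0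

-- The cast `ℕ → Fin 4` used below reduces modulo 4: `(T : Fin 4)` is the phase `T mod 4`.
open Fin.NatCast

def label (i : ℕ) : ℕ := pattern (Nat.log 2 i : Fin 4) (i % 16)

lemma label_lt_six (i : ℕ) : label i < 6 := by
  have hpattern : ∀ t : Fin 4, ∀ r < 16, pattern t r < 6 := by decide
  exact hpattern _ _ (Nat.mod_lt i (by norm_num))

def blockAscents (t t' : Fin 4) : ℕ := patternAscents 16 (pattern t) (pattern t')

lemma blockAscents_eq : blockAscents =
    ![![99, 115, 115, 100], ![99, 100, 111, 114], ![111, 99, 101, 113], ![116, 113, 101, 99]] := by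
  decide

/- The unique 4-periodic solutions of the recursions `crossDensity_succ` and
`ascentDensity_succ` between consecutive dyadic scales. -/
noncomputable def crossDensity : Fin 4 → Fin 4 → ℝ :=
  ![![1669 / 240, 323 / 48, 1549 / 240, 131 / 20],
    ![1577 / 240, 167 / 24, 1637 / 240, 32 / 5],
    ![1531 / 240, 317 / 48, 1651 / 240, 541 / 80],
    ![799 / 120, 307 / 48, 1583 / 240, 553 / 80]]

noncomputable def ascentDensity : Fin 4 → ℝ :=
  ![408647 / 1958400, 102407 / 489600, 410957 / 1958400, 409823 / 1958400]

lemma crossDensity_succ (t t' : Fin 4) :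
    2 * crossDensity (t + 1) t' = crossDensity t t' + blockAscents t t' / 16 := by
  rw [blockAscents_eq]
  fin_cases t <;> fin_cases t' <;>
    simp only [crossDensity, Fin.reduceFinMk, Fin.reduceAdd, Fin.isValue, Matrix.cons_val,
      Nat.cast_ofNat] <;>
    norm_num

lemma ascentDensity_succ (t : Fin 4) :
    4 * ascentDensity (t + 1) =
      ascentDensity t + crossDensity t t / 16 + blockAscents t t / 512 := by
  rw [blockAscents_eq]
  fin_cases t <;>
    simp only [ascentDensity, crossDensity, Fin.reduceFinMk, Fin.reduceAdd, Fin.isValue,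
      Matrix.cons_val, Nat.cast_ofNat] <;>
    norm_num

lemma crossDensity_le_eight (t t' : Fin 4) : crossDensity t t' ≤ 8 := by
  fin_cases t <;> fin_cases t' <;> norm_num [crossDensity]

lemma ascentDensity_le_one (t : Fin 4) : ascentDensity t ≤ 1 := by
  fin_cases t <;> norm_num [ascentDensity]

lemma quadratic_density_bound (t : Fin 4) {x y : ℝ} (hy : 0 ≤ y) (hyx : 16 * y ≤ x) :
    1043 / 5000 * (x + 16 * y) ^ 2 ≤
      ascentDensity t * x ^ 2 + crossDensity t t * x * y + blockAscents t t * y ^ 2 / 2 := by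
  have h := mul_nonneg hy (sub_nonneg.mpr hyx)
  rw [blockAscents_eq]
  fin_cases t <;>
    simp only [ascentDensity, crossDensity, Fin.reduceFinMk, Fin.isValue, Matrix.cons_val,
      Nat.cast_ofNat] <;>
    nlinarith [sq_nonneg y, sq_nonneg x]


lemma two_pow_eq_sixteen_mul {T : ℕ} (hT : 4 ≤ T) : 2 ^ T = 16 * 2 ^ (T - 4) := by
  obtain ⟨s, rfl⟩ := Nat.exists_eq_add_of_le hT
  simp [pow_add]

lemma two_pow_succ_eq_add {T : ℕ} (hT : 4 ≤ T) : 2 ^ (T + 1) = 2 ^ T + 16 * 2 ^ (T - 4) := by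
  rw [pow_succ, two_pow_eq_sixteen_mul hT]
  ring

lemma label_eq_pattern_of_scale {T k : ℕ} (hT : 4 ≤ T) (hk : k ≤ 2 ^ (T - 4)) :
    ∀ i ∈ Ico (2 ^ T) (2 ^ T + 16 * k), label i = pattern T (i % 16) := by
  intro i hi
  rw [mem_Ico] at hi
  rw [label, Nat.log_eq_of_pow_le_of_lt_pow hi.1 (by rw [two_pow_succ_eq_add hT]; omega)]

lemma sixteen_dvd_two_pow {T : ℕ} (hT : 4 ≤ T) : 16 ∣ 2 ^ T :=
  ⟨_, two_pow_eq_sixteen_mul hT⟩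

lemma crossAscents_scale_ge {T : ℕ} (hT : 4 ≤ T) {v : Fin 4} {m k : ℕ} (hm : 16 ∣ m)
    (hv : ∀ j ∈ Ico m (m + 16 * k), label j = pattern v (j % 16)) :
    k * (crossDensity T v * 2 ^ T - 128) ≤
      (crossAscents label (Ico 1 (2 ^ T)) (Ico m (m + 16 * k)) : ℝ) := by
  induction T, hT using Nat.le_induction with
  | base =>
    have := crossDensity_le_eight (4 : ℕ) v
    have : (0 : ℝ) ≤ k := k.cast_nonneg
    have : (0 : ℝ) ≤ crossAscents label (Ico 1 (2 ^ 4)) (Ico m (m + 16 * k)) :=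
      Nat.cast_nonneg _
    nlinarith
  | succ T hT ih =>
    have hsplit := crossAscents_Ico_add_left label (Ico m (m + 16 * k)) Nat.one_le_two_pow
      (Nat.pow_le_pow_right two_pos T.le_succ)
    have hscale : crossAscents label (Ico (2 ^ T) (2 ^ (T + 1))) (Ico m (m + 16 * k)) =
        2 ^ (T - 4) * k * blockAscents T v := by
      rw [two_pow_succ_eq_add hT]
      exact crossAscents_of_periodic (sixteen_dvd_two_pow hT) hm
        (label_eq_pattern_of_scale hT le_rfl) hv
    have hrec := crossDensity_succ T v
    have h2TR : (2 : ℝ) ^ T = 16 * 2 ^ (T - 4) := by exact_mod_cast two_pow_eq_sixteen_mul hT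
    have key : (k : ℝ) * (crossDensity ((T : Fin 4) + 1) v * 2 ^ (T + 1)) =
        k * (crossDensity T v * 2 ^ T) + 2 ^ (T - 4) * k * blockAscents T v := by
      rw [pow_succ]
      linear_combination (k : ℝ) * 2 ^ T * hrec + (k : ℝ) * blockAscents T v / 16 * h2TR
    rw [hsplit, Nat.cast_add, hscale]
    push_cast
    linarith

lemma ascents_scale_step {T k : ℕ} (hT : 4 ≤ T) (hk : k ≤ 2 ^ (T - 4)) :
    (ascents label 1 (2 ^ T) : ℝ) + k.choose 2 * blockAscents T T +
        k * (crossDensity T T * 2 ^ T - 128) ≤ ascents label 1 (2 ^ T + 16 * k) := by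
  have hblock := label_eq_pattern_of_scale hT hk
  have hsplit := ascents_eq_add (c := label) (Nat.one_le_two_pow (n := T))
    (Nat.le_add_right (2 ^ T) (16 * k))
  have hwithin := choose_two_mul_patternAscents_le_ascents (sixteen_dvd_two_pow hT) hblock
  have hcross := crossAscents_scale_ge hT (sixteen_dvd_two_pow hT) hblock
  have hwithinR :
      (k.choose 2 : ℝ) * blockAscents T T ≤ ascents label (2 ^ T) (2 ^ T + 16 * k) := by
    exact_mod_cast hwithin
  rw [hsplit]
  push_cast
  linarith

lemma ascents_two_pow_ge {T : ℕ} (hT : 4 ≤ T) :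
    ascentDensity T * (2 ^ T) ^ 2 - 16 * 2 ^ T ≤ (ascents label 1 (2 ^ T) : ℝ) := by
  induction T, hT using Nat.le_induction with
  | base =>
    have := ascentDensity_le_one (4 : ℕ)
    have : (0 : ℝ) ≤ ascents label 1 (2 ^ 4) := Nat.cast_nonneg _
    nlinarith
  | succ T hT ih =>
    have hstep := ascents_scale_step hT le_rfl
    rw [← two_pow_succ_eq_add hT] at hstep
    have hrec := ascentDensity_succ T
    have hC : (blockAscents T T : ℝ) ≤ 256 := by exact_mod_cast patternAscents_le 16 _ _
    have h2TR : (2 : ℝ) ^ T = 16 * 2 ^ (T - 4) := by exact_mod_cast two_pow_eq_sixteen_mul hT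
    rw [Nat.cast_choose_two] at hstep
    push_cast at hstep
    have hK : (0 : ℝ) ≤ 2 ^ (T - 4) := by positivity
    -- The error stays `16 · 2^T` because the last term is nonnegative: `blockAscents ≤ 16²`.
    have key : ascentDensity ((T : Fin 4) + 1) * (2 ^ (T + 1)) ^ 2 - 16 * 2 ^ (T + 1) =
        ascentDensity T * (2 ^ T) ^ 2 - 16 * 2 ^ T +
          2 ^ (T - 4) * (2 ^ (T - 4) - 1) / 2 * blockAscents T T +
          2 ^ (T - 4) * (crossDensity T T * 2 ^ T - 128) -
          2 ^ (T - 4) * (256 - blockAscents T T) / 2 := by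
      rw [show (2 : ℝ) ^ (T + 1) = 32 * 2 ^ (T - 4) by rw [pow_succ, h2TR]; ring, h2TR]
      linear_combination (16 * (2 : ℝ) ^ (T - 4)) ^ 2 * hrec
    rw [Nat.cast_succ, key]
    nlinarith [mul_le_mul_of_nonneg_left hC hK]

lemma ascents_label_ge {n : ℕ} (hn : 2 ^ 18 ≤ n) :
    3683 / 17672 * (n : ℝ) ^ 2 ≤ ascents label 1 (n + 1) := by
  set T := Nat.log 2 n
  have hT : 18 ≤ T := Nat.le_log_of_pow_le one_lt_two hn
  have hTn : 2 ^ T ≤ n := Nat.pow_log_le_self 2 (by omega)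
  have hnT : n < 2 ^ (T + 1) := Nat.lt_pow_succ_log_self one_lt_two n
  have h2T := two_pow_eq_sixteen_mul (show 4 ≤ T by omega)
  set k := (n + 1 - 2 ^ T) / 16
  have hk : k ≤ 2 ^ (T - 4) := by rw [two_pow_succ_eq_add (by omega)] at hnT; omega
  have hmono := ascents_mono_right label (Nat.one_le_two_pow.trans (Nat.le_add_right _ _))
    (show 2 ^ T + 16 * k ≤ n + 1 by omega)
  have hstep := ascents_scale_step (by omega) hk
  have hpow := ascents_two_pow_ge (show 4 ≤ T by omega)
  have hy : (0 : ℝ) ≤ k := k.cast_nonneg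
  have hyu : 16 * (k : ℝ) ≤ 2 ^ T := by
    have : 16 * k ≤ 2 ^ T := by omega
    exact_mod_cast this
  have hquad := quadratic_density_bound T hy hyu
  have hC : (blockAscents T T : ℝ) ≤ 256 := by exact_mod_cast patternAscents_le 16 _ _
  have hlow : (n : ℝ) - 15 ≤ 2 ^ T + 16 * k := by
    have : n + 1 ≤ 2 ^ T + 16 * k + 16 := by omega
    have : ((n + 1 : ℕ) : ℝ) ≤ ((2 ^ T + 16 * k + 16 : ℕ) : ℝ) := by exact_mod_cast this
    push_cast at this
    linarith
  have hn' : (2 ^ 18 : ℝ) ≤ n := by exact_mod_cast hn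
  have hmonoR : (ascents label 1 (2 ^ T + 16 * k) : ℝ) ≤ ascents label 1 (n + 1) := by
    exact_mod_cast hmono
  rw [Nat.cast_choose_two] at hstep
  nlinarith [mul_le_mul_of_nonneg_left hC hy, mul_self_le_mul_self (by linarith) hlow]

lemma isBoundedUnder_edgeCount_div_sq (G : SimpleGraph ℕ) :
    IsBoundedUnder (· ≤ ·) atTop fun n : ℕ => (edgeCount G n : ℝ) / n ^ 2 :=
  ⟨1, eventually_map.mpr <| Eventually.of_forall fun n =>
    div_le_one_of_le₀ (by exact_mod_cast edgeCount_le_sq G n) (by positivity)⟩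

theorem exists_I6_free_graph_with_large_liminf :
    ∃ G : SimpleGraph ℕ, ¬ HasIncPath G 6 ∧
      (3683 / 17672 : ℝ) ≤
        liminf (fun n : ℕ => (edgeCount G n : ℝ) / n ^ 2) atTop := by
  refine ⟨labelGraph label, not_hasIncPath_labelGraph label_lt_six, ?_⟩
  refine le_liminf_of_le (isBoundedUnder_edgeCount_div_sq _).isCoboundedUnder_ge ?_
  filter_upwards [eventually_ge_atTop (2 ^ 18)] with n hn
  rw [le_div_iff₀ (by positivity), edgeCount_labelGraph]
  exact ascents_label_ge hn
end

section
/- Let k ≥ 2 and l ≥ 1 be integers, let D be a k×l matrix of nonnegative integers, and let C and M be as defined from D. For every integer m ≥ 1, the number of edges (i,j) of C with both positions i and j lying in the block B_m is at least 2^{2m−2} · Σ_{i=1}^{l−1} Σ_{j=i+1}^{l} m_{i,j} + binom(2^{m−1}, 2) · Σ_{i=1}^{l} m_{i,i}; in particular it is at least (4^m/4) Σ_{i=1}^{l−1} Σ_{j=i+1}^{l} m_{i,j} + (4^m/8) Σ_{i=1}^{l} m_{i,i} − c_D · 2^m for a constant c_D depending only on D. -/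
open Filter

/-- The atom `D_j`: `d_{1,j}` copies of `1`, then `d_{2,j}` copies of `2`, …,
then `d_{k,j}` copies of `k`. -/
def atomList {k l : ℕ} (D : Fin k → Fin l → ℕ) (j : Fin l) : List ℕ :=
  (List.finRange k).flatMap fun i => List.replicate (D i j) ((i : ℕ) + 1)

/-- The block `B_m` (for `m ≥ 1`): `2^(m-1)` copies of `D_1`, then `2^(m-1)` copies
of `D_2`, …, then `2^(m-1)` copies of `D_l`, concatenated. -/
def blockList {k l : ℕ} (D : Fin k → Fin l → ℕ) (m : ℕ) : List ℕ :=
  (List.finRange l).flatMap fun j => (List.replicate (2 ^ (m - 1)) (atomList D j)).flatten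

/-- The concatenation `B_1 B_2 ⋯ B_m`. -/
def prefixList {k l : ℕ} (D : Fin k → Fin l → ℕ) (m : ℕ) : List ℕ :=
  (List.range m).flatMap fun x => blockList D (x + 1)

/-- The term `c_r` (1-indexed) of the infinite sequence `C = B_1 B_2 B_3 ⋯`. -/
def seqC {k l : ℕ} (D : Fin k → Fin l → ℕ) (r : ℕ) : ℕ :=
  (prefixList D r).getD (r - 1) 0

/-- The `(i,j)` entry `m_{i,j}` of the matrix `M`:
`m_{i,j} = Σ_{x=1}^{k-1} d_{x,i} (Σ_{y=x+1}^{k} d_{y,j})`. -/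
def Ment {k l : ℕ} (D : Fin k → Fin l → ℕ) (i j : Fin l) : ℕ :=
  ∑ x : Fin k, D x i * ∑ y ∈ Finset.Ioi x, D y j

/-- The number of edges `(i, j)` of `C` (pairs `i < j` with `c_i < c_j`) such that
`a < i ≤ b` and `c < j ≤ d` (positions are 1-indexed). -/
noncomputable def edgesBetween {k l : ℕ} (D : Fin k → Fin l → ℕ) (a b c d : ℕ) : ℕ :=
  {p : ℕ × ℕ | p.1 < p.2 ∧ a < p.1 ∧ p.1 ≤ b ∧ c < p.2 ∧ p.2 ≤ d ∧
    seqC D p.1 < seqC D p.2}.ncard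

/-! Call an ascent of a list a pair of positions `p < q` carrying values `a < b`. Ascents of
`L₁ ++ L₂` are those of `L₁`, those of `L₂`, and the cross pairs, whose number only depends on
the two lists as multisets. Since `B_m` is the concatenation over `j` of `N = 2^(m-1)` copies of
the atom `D_j`, and the cross pairs between a copy of `D_i` and a copy of `D_j` number `m_{i,j}`,
the edges inside `B_m` number exactly
`N Σ_j asc(D_j) + C(N,2) Σ_j m_{j,j} + N² Σ_{i<j} m_{i,j}`.
With `c_D = Σ_i m_{i,i} / 4`, the second bound is the first one rewritten, as
`C(N,2) = 4^m/8 - 2^m/4`. -/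

open Finset

namespace List
variable {α : Type*} [LT α] [DecidableLT α]

def ascents : List α → ℕ
  | [] => 0
  | a :: t => t.countP (a < ·) + ascents t

def crossAscents (L₁ L₂ : List α) : ℕ := (L₁.map fun a => L₂.countP (a < ·)).sum

@[simp] lemma ascents_nil : ([] : List α).ascents = 0 := rfl

@[simp] lemma ascents_cons (a : α) (t : List α) :
    (a :: t).ascents = t.countP (a < ·) + t.ascents := rfl

@[simp] lemma crossAscents_nil_left (L : List α) : crossAscents [] L = 0 := rfl

@[simp] lemma crossAscents_cons_left (a : α) (t L : List α) :
    crossAscents (a :: t) L = L.countP (a < ·) + crossAscents t L := by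
  simp [crossAscents]

lemma crossAscents_append_left (L₁ L₁' L₂ : List α) :
    crossAscents (L₁ ++ L₁') L₂ = crossAscents L₁ L₂ + crossAscents L₁' L₂ := by
  simp [crossAscents]

lemma crossAscents_append_right (L₁ L₂ L₂' : List α) :
    crossAscents L₁ (L₂ ++ L₂') = crossAscents L₁ L₂ + crossAscents L₁ L₂' := by
  simp [crossAscents, countP_append, sum_map_add]

lemma ascents_append (L₁ L₂ : List α) :
    (L₁ ++ L₂).ascents = L₁.ascents + L₂.ascents + crossAscents L₁ L₂ := by
  induction L₁ with
  | nil => simp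
  | cons a t ih =>
    simp only [cons_append, ascents_cons, countP_append, ih, crossAscents_cons_left]
    ring

lemma crossAscents_flatten_left (Ls : List (List α)) (L : List α) :
    crossAscents Ls.flatten L = (Ls.map (crossAscents · L)).sum := by
  induction Ls with
  | nil => simp
  | cons A Ls ih => simp [crossAscents_append_left, ih]

lemma crossAscents_flatten_right (L : List α) (Ls : List (List α)) :
    crossAscents L Ls.flatten = (Ls.map (crossAscents L)).sum := by
  induction Ls with
  | nil => simp [crossAscents]
  | cons A Ls ih => simp [crossAscents_append_right, ih]

lemma crossAscents_replicate (a b : ℕ) (u v : α) :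
    crossAscents (replicate a u) (replicate b v) = if u < v then a * b else 0 := by
  by_cases h : u < v <;> simp [crossAscents, countP_replicate, h]

lemma crossAscents_flatMap_finRange {n n' : ℕ} (f : Fin n → List α) (g : Fin n' → List α) :
    crossAscents ((finRange n).flatMap f) ((finRange n').flatMap g) =
      ∑ i, ∑ j, crossAscents (f i) (g j) := by
  simp only [flatMap_def, crossAscents_flatten_left, crossAscents_flatten_right, map_map,
    Function.comp_def, ← Fin.sum_univ_def]
  exact sum_comm

lemma crossAscents_replicate_flatten (n n' : ℕ) (A B : List α) :
    crossAscents (replicate n A).flatten (replicate n' B).flatten =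
      n * n' * crossAscents A B := by
  simp [crossAscents_flatten_left, crossAscents_flatten_right, mul_left_comm, mul_assoc]

lemma ascents_replicate_flatten (n : ℕ) (A : List α) :
    (replicate n A).flatten.ascents = n * A.ascents + n.choose 2 * crossAscents A A := by
  induction n with
  | zero => simp
  | succ n ih =>
    rw [replicate_succ, flatten_cons, ascents_append, ih, crossAscents_flatten_right]
    simp [Nat.choose_succ_succ, add_mul]
    ring

lemma ascents_flatMap_finRange {n : ℕ} (f : Fin n → List α) :
    ((finRange n).flatMap f).ascents =
      ∑ i, (f i).ascents + ∑ i, ∑ j ∈ Ioi i, crossAscents (f i) (f j) := by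
  induction n with
  | zero => simp
  | succ n ih =>
    rw [finRange_succ, flatMap_cons, flatMap_map, ascents_append, ih, flatMap_def,
      crossAscents_flatten_right, Fin.sum_univ_succ, Fin.sum_univ_succ]
    simp only [Fin.sum_Ioi_zero, Fin.sum_Ioi_succ, map_map, ← Fin.sum_univ_def,
      Function.comp_def]
    ring

lemma countP_eq_sum_fin {β : Type*} (p : β → Bool) (t : List β) :
    t.countP p = ∑ j : Fin t.length, if p t[j] then 1 else 0 := by
  induction t with
  | nil => simp
  | cons b t ih =>
    simp only [countP_cons, ih, add_comm, length_cons, Fin.sum_univ_succ]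
    rfl

lemma ascents_eq_card (L : List α) :
    L.ascents = #{p : Fin L.length × Fin L.length | p.1 < p.2 ∧ L[p.1] < L[p.2]} := by
  rw [card_filter, Fintype.sum_prod_type]
  induction L with
  | nil => simp
  | cons a t ih =>
    simp only [ascents_cons, ih, countP_eq_sum_fin, length_cons, Fin.sum_univ_succ]
    simp

lemma ncard_ascents_of_eq_getElem {c : ℕ → α} (P : ℕ) (L : List α)
    (hc : ∀ i (hi : i < L.length), c (P + 1 + i) = L[i]) :
    {p : ℕ × ℕ | p.1 < p.2 ∧ P < p.1 ∧ p.1 ≤ P + L.length ∧ P < p.2 ∧ p.2 ≤ P + L.length ∧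
      c p.1 < c p.2}.ncard = L.ascents := by
  set shift : Fin L.length × Fin L.length → ℕ × ℕ := fun p => (P + 1 + p.1, P + 1 + p.2)
  have hshift : Function.Injective shift := by
    rintro ⟨i, j⟩ ⟨i', j'⟩ h
    simp only [shift, Prod.mk.injEq] at h
    simp only [Prod.mk.injEq, Fin.ext_iff]
    omega
  rw [ascents_eq_card, ← Set.ncard_coe_finset, ← Set.ncard_image_of_injective _ hshift]
  congr 1
  ext ⟨p, q⟩
  simp only [Set.mem_ofPred_eq, coe_filter, mem_univ, true_and, Set.mem_image, shift,
    Prod.mk.injEq, Prod.exists]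
  constructor
  · rintro ⟨hpq, hp, hpL, hq, hqL, hc'⟩
    refine ⟨⟨p - (P + 1), by omega⟩, ⟨q - (P + 1), by omega⟩, ⟨?_, ?_⟩, by simp only; omega,
      by simp only; omega⟩
    · simp only [Fin.mk_lt_mk]; omega
    · show L[p - (P + 1)] < L[q - (P + 1)]
      rwa [← hc, ← hc, show P + 1 + (p - (P + 1)) = p by omega,
        show P + 1 + (q - (P + 1)) = q by omega]
  · rintro ⟨i, j, ⟨hij, hL⟩, rfl, rfl⟩
    have : (i : ℕ) < j := hij
    refine ⟨by omega, by omega, by omega, by omega, by omega, ?_⟩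
    rwa [hc, hc]

end List

section Blocks
variable {k l : ℕ} (D : Fin k → Fin l → ℕ)

lemma crossAscents_atomList (i j : Fin l) :
    (atomList D i).crossAscents (atomList D j) = Ment D i j := by
  simp only [atomList, List.crossAscents_flatMap_finRange, List.crossAscents_replicate,
    add_lt_add_iff_right, Fin.val_fin_lt, Ment, mul_sum, ← sum_filter, filter_lt_eq_Ioi]

lemma ascents_blockList (m : ℕ) :
    (blockList D m).ascents =
      2 ^ (m - 1) * ∑ j, (atomList D j).ascents + (2 ^ (m - 1)).choose 2 * ∑ j, Ment D j j +
        2 ^ (m - 1) * 2 ^ (m - 1) * ∑ i, ∑ j ∈ Ioi i, Ment D i j := by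
  simp only [blockList, List.ascents_flatMap_finRange, List.ascents_replicate_flatten,
    List.crossAscents_replicate_flatten, crossAscents_atomList, sum_add_distrib, mul_sum]

lemma le_ascents_blockList (m : ℕ) :
    2 ^ (2 * m - 2) * ∑ i, ∑ j ∈ Ioi i, Ment D i j + (2 ^ (m - 1)).choose 2 * ∑ i, Ment D i i ≤
      (blockList D m).ascents := by
  rw [ascents_blockList, ← pow_add, show m - 1 + (m - 1) = 2 * m - 2 by omega]
  omega

lemma prefixList_succ (m : ℕ) :
    prefixList D (m + 1) = prefixList D m ++ blockList D (m + 1) := by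
  simp [prefixList, List.range_succ]

lemma blockList_eq_nil_iff (m : ℕ) : blockList D m = [] ↔ ∀ j, atomList D j = [] := by
  simp [blockList, List.flatMap_eq_nil_iff]

lemma prefixList_prefix_of_le {m r : ℕ} (h : m ≤ r) : prefixList D m <+: prefixList D r := by
  induction r, h using Nat.le_induction with
  | base => exact List.prefix_refl _
  | succ r _ ih => exact ih.trans (prefixList_succ D r ▸ List.prefix_append _ _)

lemma le_length_prefixList {m : ℕ} (hm : blockList D m ≠ []) (r : ℕ) :
    r ≤ (prefixList D r).length := by
  induction r with
  | zero => simp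
  | succ r ih =>
    have : blockList D (r + 1) ≠ [] := by
      rwa [Ne, blockList_eq_nil_iff, ← blockList_eq_nil_iff D m]
    rw [prefixList_succ, List.length_append]
    have := List.length_pos_iff.2 this
    omega

lemma prefixList_eq_append_blockList {m : ℕ} (hm : 1 ≤ m) :
    prefixList D m = prefixList D (m - 1) ++ blockList D m := by
  simpa [Nat.sub_add_cancel hm] using prefixList_succ D (m - 1)

lemma seqC_prefixList_length_add {m : ℕ} (hm : 1 ≤ m) {i : ℕ}
    (hi : i < (blockList D m).length) :
    seqC D ((prefixList D (m - 1)).length + 1 + i) = (blockList D m)[i] := by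
  have hsplit := prefixList_eq_append_blockList D hm
  set P := (prefixList D (m - 1)).length
  -- `seqC D r` reads position `r` inside `B_1 ⋯ B_r`, which is long enough as no block is empty
  have hP : m - 1 ≤ P :=
    le_length_prefixList D (m := m) (List.ne_nil_of_length_pos (by omega)) (m - 1)
  have hpre := prefixList_prefix_of_le D (by omega : m ≤ P + 1 + i)
  have hPi : P + i < (prefixList D m).length := by rw [hsplit, List.length_append]; omega
  rw [seqC, show P + 1 + i - 1 = P + i by omega,
    List.getD_eq_getElem _ _ (hPi.trans_le hpre.length_le), ← hpre.getElem hPi]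
  simp only [hsplit, List.getElem_append_right (Nat.le_add_right P i), P, Nat.add_sub_cancel_left]

lemma edgesBetween_blockList_eq_ascents {m : ℕ} (hm : 1 ≤ m) :
    edgesBetween D (prefixList D (m - 1)).length (prefixList D m).length
      (prefixList D (m - 1)).length (prefixList D m).length = (blockList D m).ascents := by
  rw [edgesBetween, prefixList_eq_append_blockList D hm, List.length_append]
  exact List.ncard_ascents_of_eq_getElem _ _ fun i hi => seqC_prefixList_length_add D hm hi

end Blocks

lemma two_pow_two_mul_sub_two {m : ℕ} (hm : 1 ≤ m) : (2 : ℝ) ^ (2 * m - 2) = 4 ^ m / 4 := by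
  obtain ⟨e, rfl⟩ := Nat.exists_eq_add_of_le' hm
  rw [show 2 * (e + 1) - 2 = 2 * e by omega, pow_mul]
  ring

lemma cast_choose_two_two_pow {m : ℕ} (hm : 1 ≤ m) :
    ((2 ^ (m - 1)).choose 2 : ℝ) = 4 ^ m / 8 - 2 ^ m / 4 := by
  obtain ⟨e, rfl⟩ := Nat.exists_eq_add_of_le' hm
  rw [Nat.cast_choose_two, show (4 : ℝ) = 2 ^ 2 by norm_num, ← pow_mul]
  push_cast
  ring

theorem edges_within_block_general (k l : ℕ) (D : Fin k → Fin l → ℕ) :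
    (∀ m : ℕ, 1 ≤ m →
      2 ^ (2 * m - 2) * (∑ i : Fin l, ∑ j ∈ Finset.Ioi i, Ment D i j) +
          Nat.choose (2 ^ (m - 1)) 2 * (∑ i : Fin l, Ment D i i) ≤
        edgesBetween D (prefixList D (m - 1)).length (prefixList D m).length
          (prefixList D (m - 1)).length (prefixList D m).length) ∧
    ∃ c_D : ℝ, ∀ m : ℕ, 1 ≤ m →
      (4 : ℝ) ^ m / 4 * (∑ i : Fin l, ∑ j ∈ Finset.Ioi i, (Ment D i j : ℝ)) +
          (4 : ℝ) ^ m / 8 * (∑ i : Fin l, (Ment D i i : ℝ)) - c_D * 2 ^ m ≤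
        (edgesBetween D (prefixList D (m - 1)).length (prefixList D m).length
          (prefixList D (m - 1)).length (prefixList D m).length : ℝ) := by
  refine ⟨fun m hm => ?_, (∑ i, (Ment D i i : ℝ)) / 4, fun m hm => ?_⟩
  · rw [edgesBetween_blockList_eq_ascents D hm]
    exact le_ascents_blockList D m
  · rw [edgesBetween_blockList_eq_ascents D hm]
    refine le_of_eq_of_le ?_ (Nat.cast_le.2 (le_ascents_blockList D m))
    push_cast [two_pow_two_mul_sub_two hm, cast_choose_two_two_pow hm]
    ring

/-- Lemma 3.3: for `m ≥ 1`, the number of edges of `C` with both positions in the block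
`B_m` is at least `2^(2m-2) Σ_{i<j} m_{i,j} + C(2^(m-1),2) Σ_i m_{i,i}`; in particular,
it is at least `(4^m/4) Σ_{i<j} m_{i,j} + (4^m/8) Σ_i m_{i,i} - c_D 2^m` for a constant
`c_D` depending only on `D`. -/
theorem edges_within_block (k l : ℕ) (hk : 2 ≤ k) (hl : 1 ≤ l)
    (D : Fin k → Fin l → ℕ) :
    (∀ m : ℕ, 1 ≤ m →
      2 ^ (2 * m - 2) * (∑ i : Fin l, ∑ j ∈ Finset.Ioi i, Ment D i j) +
          Nat.choose (2 ^ (m - 1)) 2 * (∑ i : Fin l, Ment D i i) ≤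
        edgesBetween D (prefixList D (m - 1)).length (prefixList D m).length
          (prefixList D (m - 1)).length (prefixList D m).length) ∧
    ∃ c_D : ℝ, ∀ m : ℕ, 1 ≤ m →
      (4 : ℝ) ^ m / 4 * (∑ i : Fin l, ∑ j ∈ Finset.Ioi i, (Ment D i j : ℝ)) +
          (4 : ℝ) ^ m / 8 * (∑ i : Fin l, (Ment D i i : ℝ)) - c_D * 2 ^ m ≤
        (edgesBetween D (prefixList D (m - 1)).length (prefixList D m).length
          (prefixList D (m - 1)).length (prefixList D m).length : ℝ) :=
  edges_within_block_general k l D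
end
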